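/- arXiv:1308.0853 — 2 statements merged into one kernel-verified Lean document; each statement's English description precedes it below -/
import Mathlib

section
/- (Abstract refined Sobolev inequality) Let (M, μ) be a measure space, A a nonnegative self-adjoint operator on L²(M, μ), and θ : ℝ → ℝ a bounded continuous function with θ ≡ 1 on [−c, c] for some c > 0. For s > 0, σ > 0 set p = 2(σ + s)/σ, ‖u‖_{Ḣ^s_A} = ‖A^s u‖_{L²}, and ‖u‖_{Ḃ^{-σ}_A} = sup_{k ∈ ℤ} 2^{-kσ} ‖θ(2^{-k} A) u‖_{L^∞}. Then for every u ∈ Dom(A^s) with ‖u‖_{Ḃ^{-σ}_A} < ∞, one has ‖u‖_{L^p} ≤ C ‖u‖_{Ḃ^{-σ}_A}^{1 − 2/p} ‖u‖_{Ḣ^s_A}^{2/p}, with C = 2 ‖1 − θ‖_{L^∞}^{2/p} (p/(p−2))^{1/p} (2/c)^{σ(p−2)/p}. -/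
/-!
For `λ > 0` choose the scale `k` with `2^{σk} B ≤ λ/2 < 2^{σ(k+1)} B`. Where `|u| > λ` we then
have `|u - v k| > λ/2`, so Chebyshev's inequality and the spectral tail bound give
`λ² μ{|u| > λ} ≤ 4 Mθ² ν{|t| > c 2^k} ≤ 4 Mθ² ν{λ < 2B (2|t|/c)^σ}`.
Integrating this weak-type bound against `p λ^{p-1} dλ` (the layer-cake formula on both sides)
bounds `‖u‖_p^p` by a multiple of `∫ |t|^{σ(p-2)} dν = ∫ |t|^{2s} dν = H²`.
Since `u` need not be measurable, the argument runs on a measurable minorant of `|u|` with the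
same `L^p` norm; the case `B = 0` follows by letting the Besov bound decrease to `B`.
-/

open MeasureTheory Set Filter Topology

lemma exists_measurable_le_abs_lintegral_rpow_eq {α : Type*} [MeasurableSpace α]
    (μ : Measure α) (u : α → ℝ) {p : ℝ} (hp : 0 < p) :
    ∃ f : α → ℝ, Measurable f ∧ 0 ≤ f ∧ (∀ x, f x ≤ |u x|) ∧
      ∫⁻ x, ‖u x‖ₑ ^ p ∂μ = ∫⁻ x, ENNReal.ofReal (f x ^ p) ∂μ := by
  obtain ⟨g, hg, hgu, hint⟩ := exists_measurable_le_lintegral_eq μ fun x => ‖u x‖ₑ ^ p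
  refine ⟨fun x => (g x ^ p⁻¹).toReal, (hg.pow_const _).ennreal_toReal,
    fun x => ENNReal.toReal_nonneg, fun x => ?_, hint.trans (lintegral_congr fun x => ?_)⟩
  · have hle : g x ^ p⁻¹ ≤ ‖u x‖ₑ := by
      simpa [ENNReal.rpow_rpow_inv hp.ne'] using
        ENNReal.rpow_le_rpow (hgu x) (inv_nonneg.2 hp.le)
    simpa [Real.enorm_eq_ofReal_abs] using ENNReal.toReal_mono (by simp) hle
  · have hfin : g x ≠ ⊤ := ne_top_of_le_ne_top (by simp [hp.le]) (hgu x)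
    rw [ENNReal.toReal_rpow, ENNReal.rpow_inv_rpow hp.ne', ENNReal.ofReal_toReal hfin]

lemma mul_measure_le_lintegral_of_ae_le {α : Type*} [MeasurableSpace α] {μ : Measure α}
    {S : Set α} (hS : MeasurableSet S) {ε : ENNReal} {φ : α → ENNReal}
    (h : ∀ᵐ x ∂μ, x ∈ S → ε ≤ φ x) : ε * μ S ≤ ∫⁻ x, φ x ∂μ :=
  calc ε * μ S = ∫⁻ _ in S, ε ∂μ := (setLIntegral_const S ε).symm
    _ ≤ ∫⁻ x in S, φ x ∂μ := setLIntegral_mono_ae' hS h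
    _ ≤ ∫⁻ x, φ x ∂μ := setLIntegral_le_lintegral S φ

lemma ofReal_sq_mul_meas_lt_le_lintegral_sq_sub {α : Type*} [MeasurableSpace α]
    {μ : Measure α} {f u v : α → ℝ} (hf : Measurable f) (hfu : ∀ x, f x ≤ |u x|) {t : ℝ}
    (hv : ∀ᵐ x ∂μ, |v x| ≤ t / 2) :
    ENNReal.ofReal ((t / 2) ^ 2) * μ {x | t < f x} ≤ ∫⁻ x, ENNReal.ofReal ((u x - v x) ^ 2) ∂μ := by
  refine mul_measure_le_lintegral_of_ae_le (measurableSet_lt measurable_const hf) ?_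
  filter_upwards [hv] with x hvx (hx : t < f x)
  have htriangle : |u x| - |v x| ≤ |u x - v x| := abs_sub_abs_le_abs_sub _ _
  refine ENNReal.ofReal_le_ofReal (sq_le_sq.2 ?_)
  rw [abs_of_nonneg ((abs_nonneg _).trans hvx)]
  linarith [hfu x]

lemma lintegral_rpow_le_of_meas_lt_le {α β : Type*} [MeasurableSpace α] [MeasurableSpace β]
    {μ : Measure α} {ν : Measure β} {f : α → ℝ} {g : β → ℝ}
    (hf : Measurable f) (hf₀ : 0 ≤ f) (hg : Measurable g) (hg₀ : 0 ≤ g)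
    {q r K : ℝ} (hq : 0 < q) (hrq : r < q)
    (h : ∀ t > 0, ENNReal.ofReal (t ^ r) * μ {x | t < f x} ≤ ENNReal.ofReal K * ν {y | t < g y}) :
    ∫⁻ x, ENNReal.ofReal (f x ^ q) ∂μ
      ≤ ENNReal.ofReal (K * q / (q - r)) * ∫⁻ y, ENNReal.ofReal (g y ^ (q - r)) ∂ν := by
  have hqr : 0 < q - r := sub_pos.2 hrq
  have hpointwise : ∀ t ∈ Ioi (0:ℝ), μ {x | t < f x} * ENNReal.ofReal (t ^ (q - 1))
      ≤ ENNReal.ofReal K * ν {y | t < g y} * ENNReal.ofReal (t ^ (q - r - 1)) := by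
    intro t (ht : 0 < t)
    calc μ {x | t < f x} * ENNReal.ofReal (t ^ (q - 1))
        = ENNReal.ofReal (t ^ r) * μ {x | t < f x} * ENNReal.ofReal (t ^ (q - r - 1)) := by
          rw [mul_comm (ENNReal.ofReal _), mul_assoc, ← ENNReal.ofReal_mul (by positivity),
            ← Real.rpow_add ht]
          ring_nf
      _ ≤ ENNReal.ofReal K * ν {y | t < g y} * ENNReal.ofReal (t ^ (q - r - 1)) :=
          mul_le_mul_of_nonneg_right (h t ht) zero_le
  calc ∫⁻ x, ENNReal.ofReal (f x ^ q) ∂μ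
      = ENNReal.ofReal q * ∫⁻ t in Ioi 0, μ {x | t < f x} * ENNReal.ofReal (t ^ (q - 1)) :=
        lintegral_rpow_eq_lintegral_meas_lt_mul μ (ae_of_all _ hf₀) hf.aemeasurable hq
    _ ≤ ENNReal.ofReal q * ∫⁻ t in Ioi 0,
          ENNReal.ofReal K * ν {y | t < g y} * ENNReal.ofReal (t ^ (q - r - 1)) := by
        gcongr ENNReal.ofReal q * ?_
        exact setLIntegral_mono' measurableSet_Ioi hpointwise
    _ = ENNReal.ofReal (K * q / (q - r)) * (ENNReal.ofReal (q - r) *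
          ∫⁻ t in Ioi 0, ν {y | t < g y} * ENNReal.ofReal (t ^ (q - r - 1))) := by
        simp_rw [mul_assoc (ENNReal.ofReal K)]
        rw [lintegral_const_mul' _ _ ENNReal.ofReal_ne_top, ← mul_assoc, ← mul_assoc,
          ← ENNReal.ofReal_mul hq.le, ← ENNReal.ofReal_mul' hqr.le,
          div_mul_cancel₀ _ hqr.ne', mul_comm q]
    _ = ENNReal.ofReal (K * q / (q - r)) * ∫⁻ y, ENNReal.ofReal (g y ^ (q - r)) ∂ν := by
        rw [lintegral_rpow_eq_lintegral_meas_lt_mul ν (ae_of_all _ hg₀) hg.aemeasurable hqr]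

lemma exists_int_mem_Ico_two_rpow_mul {a B σ : ℝ} (ha : 0 < a) (hB : 0 < B) (hσ : 0 < σ) :
    ∃ k : ℤ, a ∈ Ico ((2:ℝ) ^ (σ * k) * B) ((2:ℝ) ^ (σ * (k + 1)) * B) := by
  obtain ⟨k, hk⟩ := exists_mem_Ico_zpow (div_pos ha hB) (Real.one_lt_rpow one_lt_two hσ)
  refine ⟨k, ?_⟩
  simp only [← Real.rpow_intCast, ← Real.rpow_mul zero_le_two, Int.cast_add, Int.cast_one,
    mem_Ico, le_div_iff₀ hB, div_lt_iff₀ hB] at hk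
  exact hk

lemma refined_sobolev_constant_rpow {p σ c B H Mθ : ℝ} (hp : 2 < p) (hc : 0 < c)
    (hB : 0 ≤ B) (hH : 0 ≤ H) (hMθ : 0 ≤ Mθ) :
    ((2 * Mθ ^ (2/p) * (p/(p-2)) ^ (1/p) * (2/c) ^ (σ*(p-2)/p)) * B ^ (1 - 2/p) * H ^ (2/p)) ^ p
      = 4 * Mθ ^ 2 * p / (p - 2) * ((2 * B) ^ (p - 2) * (2 / c) ^ (σ * (p - 2)) * H ^ 2) := by
  have hp₀ : p ≠ 0 := by positivity
  have hrpow_div : ∀ {x : ℝ} (y : ℝ), 0 ≤ x → (x ^ (y / p)) ^ p = x ^ y := fun y hx => by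
    rw [← Real.rpow_mul hx, div_mul_cancel₀ _ hp₀]
  have htwo : (2:ℝ) ^ p = 4 * 2 ^ (p - 2) := by
    rw [Real.rpow_sub two_pos, Real.rpow_two]
    ring
  rw [show 1 - 2 / p = (p - 2) / p by field_simp, Real.mul_rpow (by positivity) (by positivity),
    Real.mul_rpow (by positivity) (by positivity), Real.mul_rpow (by positivity) (by positivity),
    Real.mul_rpow (by positivity) (by positivity), Real.mul_rpow (by positivity) (by positivity),
    hrpow_div _ hMθ, hrpow_div _ (by positivity), hrpow_div _ (by positivity), hrpow_div _ hB,
    hrpow_div _ hH, Real.rpow_two, Real.rpow_two, Real.rpow_one, Real.mul_rpow zero_le_two hB,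
    htwo]
  ring

section RefinedSobolev

variable {M : Type*} [MeasurableSpace M] {μ : Measure M} {u : M → ℝ} {v : ℤ → M → ℝ}
  {ν : Measure ℝ} {σ c B H Mθ p : ℝ}

lemma ofReal_rpow_two_mul_meas_lt_le_of_besov_bound (hσ : 0 < σ) (hc : 0 < c) (hB : 0 < B)
    (hv : ∀ k : ℤ, ∀ᵐ x ∂μ, |v k x| ≤ (2:ℝ) ^ (σ * (k:ℝ)) * B)
    (hw : ∀ k : ℤ, ∫⁻ x, ENNReal.ofReal ((u x - v k x) ^ 2) ∂μ
      ≤ ENNReal.ofReal (Mθ ^ 2) * ν {t | c * (2:ℝ) ^ (k:ℝ) < |t|})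
    {f : M → ℝ} (hf : Measurable f) (hfu : ∀ x, f x ≤ |u x|) {t : ℝ} (ht : 0 < t) :
    ENNReal.ofReal (t ^ (2:ℝ)) * μ {x | t < f x}
      ≤ ENNReal.ofReal (4 * Mθ ^ 2) * ν {τ | t < 2 * B * (2 / c * |τ|) ^ σ} := by
  obtain ⟨k, hk_le, hk_lt⟩ := exists_int_mem_Ico_two_rpow_mul (half_pos ht) hB hσ
  have hcheb := (ofReal_sq_mul_meas_lt_le_lintegral_sq_sub hf hfu
    ((hv k).mono fun x hx => hx.trans hk_le)).trans (hw k)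
  have hsub : {τ : ℝ | c * (2:ℝ) ^ (k:ℝ) < |τ|} ⊆ {τ | t < 2 * B * (2 / c * |τ|) ^ σ} := by
    intro τ (hτ : c * (2:ℝ) ^ (k:ℝ) < |τ|)
    have hscale : (2:ℝ) ^ ((k:ℝ) + 1) < 2 / c * |τ| := by
      have hτc := (lt_div_iff₀' hc).2 hτ
      rw [Real.rpow_add_one two_ne_zero, div_mul_comm]
      linarith
    have hpow : (2:ℝ) ^ (σ * (k + 1)) < (2 / c * |τ|) ^ σ := by
      rw [mul_comm, Real.rpow_mul zero_le_two]
      exact Real.rpow_lt_rpow (by positivity) hscale hσ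
    show t < 2 * B * (2 / c * |τ|) ^ σ
    nlinarith
  calc ENNReal.ofReal (t ^ (2:ℝ)) * μ {x | t < f x}
      = ENNReal.ofReal 4 * (ENNReal.ofReal ((t / 2) ^ 2) * μ {x | t < f x}) := by
        rw [← mul_assoc, ← ENNReal.ofReal_mul zero_le_four, Real.rpow_two]; ring_nf
    _ ≤ ENNReal.ofReal 4 * (ENNReal.ofReal (Mθ ^ 2) * ν {τ | t < 2 * B * (2 / c * |τ|) ^ σ}) :=
        mul_le_mul_right (hcheb.trans (mul_le_mul_right (measure_mono hsub) _)) _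
    _ = ENNReal.ofReal (4 * Mθ ^ 2) * ν {τ | t < 2 * B * (2 / c * |τ|) ^ σ} := by
        rw [← mul_assoc, ← ENNReal.ofReal_mul zero_le_four]

lemma eLpNorm_le_of_besov_bound_of_pos (hσ : 0 < σ) (hc : 0 < c) (hB : 0 < B) (hH : 0 ≤ H)
    (hMθ : 0 ≤ Mθ) (hp : 2 < p)
    (hv : ∀ k : ℤ, ∀ᵐ x ∂μ, |v k x| ≤ (2:ℝ) ^ (σ * (k:ℝ)) * B)
    (hw : ∀ k : ℤ, ∫⁻ x, ENNReal.ofReal ((u x - v k x) ^ 2) ∂μ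
      ≤ ENNReal.ofReal (Mθ ^ 2) * ν {t | c * (2:ℝ) ^ (k:ℝ) < |t|})
    (hH2 : ∫⁻ t, ENNReal.ofReal (|t| ^ (σ * (p - 2))) ∂ν = ENNReal.ofReal (H ^ 2)) :
    eLpNorm u (ENNReal.ofReal p) μ
      ≤ ENNReal.ofReal
          ((2 * Mθ ^ (2/p) * (p/(p-2)) ^ (1/p) * (2/c) ^ (σ*(p-2)/p))
            * B ^ (1 - 2/p) * H ^ (2/p)) := by
  have hp₀ : 0 < p := by linarith
  obtain ⟨f, hf, hf₀, hfu, hf_int⟩ := exists_measurable_le_abs_lintegral_rpow_eq μ u hp₀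
  set g : ℝ → ℝ := fun τ => 2 * B * (2 / c * |τ|) ^ σ
  have hg : Measurable g := by fun_prop
  have hg₀ : 0 ≤ g := fun τ => by positivity
  have hg_int : ∫⁻ τ, ENNReal.ofReal (g τ ^ (p - 2)) ∂ν
      = ENNReal.ofReal ((2 * B) ^ (p - 2) * (2 / c) ^ (σ * (p - 2))) * ENNReal.ofReal (H ^ 2) := by
    rw [← hH2, ← lintegral_const_mul' _ _ ENNReal.ofReal_ne_top]
    refine lintegral_congr fun τ => ?_
    rw [← ENNReal.ofReal_mul (by positivity), Real.mul_rpow (by positivity) (by positivity),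
      ← Real.rpow_mul (by positivity), Real.mul_rpow (by positivity) (abs_nonneg τ), mul_assoc]
  have hlayer := lintegral_rpow_le_of_meas_lt_le hf hf₀ hg hg₀ hp₀ hp
    fun t ht => ofReal_rpow_two_mul_meas_lt_le_of_besov_bound hσ hc hB hv hw hf hfu ht
  set C := (2 * Mθ ^ (2/p) * (p/(p-2)) ^ (1/p) * (2/c) ^ (σ*(p-2)/p))
    * B ^ (1 - 2/p) * H ^ (2/p)
  have hC : 0 ≤ C := by positivity
  rw [hg_int, ← ENNReal.ofReal_mul (by positivity), ← ENNReal.ofReal_mul (by positivity),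
    ← refined_sobolev_constant_rpow hp hc hB.le hH hMθ] at hlayer
  rw [eLpNorm_eq_lintegral_rpow_enorm_toReal (by simpa using hp₀) ENNReal.ofReal_ne_top,
    ENNReal.toReal_ofReal hp₀.le, hf_int]
  calc (∫⁻ x, ENNReal.ofReal (f x ^ p) ∂μ) ^ (1 / p) ≤ ENNReal.ofReal (C ^ p) ^ (1 / p) := by
        gcongr
    _ = ENNReal.ofReal C := by
      rw [ENNReal.ofReal_rpow_of_nonneg (by positivity) (by positivity), ← Real.rpow_mul hC,
        mul_one_div_cancel hp₀.ne', Real.rpow_one]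

end RefinedSobolev

/-- Abstract refined Sobolev inequality. Here `v k` plays the role of `θ(2^{-k}A)u`
(with `‖v k‖_∞ ≤ 2^{kσ} B`, `B` the Besov norm `‖u‖_{Ḃ^{-σ}_A}`), `ν` is the spectral
measure `d(u, E_t u)` of the nonnegative selfadjoint operator `A` at `u` (so that
`‖u - v k‖_{L²}² ≤ (sup|1-θ|)² ν({|t| > c 2^k})` since `θ ≡ 1` on `[-c,c]`, and
`∫ |t|^{2s} dν = ‖A^s u‖² = H²`). Then `‖u‖_{L^p} ≤ C B^{1-2/p} H^{2/p}` with the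
explicit constant `C = 2 ‖1-θ‖_∞^{2/p} (p/(p-2))^{1/p} (2/c)^{σ(p-2)/p}`. -/
theorem abstract_refined_sobolev {M : Type*} [MeasurableSpace M] (μ : Measure M)
    (u : M → ℝ) (v : ℤ → M → ℝ) (ν : Measure ℝ)
    (s σ c B H Mθ : ℝ) (hs : 0 < s) (hσ : 0 < σ) (hc : 0 < c)
    (hB : 0 ≤ B) (hH : 0 ≤ H) (hMθ : 0 ≤ Mθ)
    (p : ℝ) (hp : p = 2 * (σ + s) / σ)
    (hv : ∀ k : ℤ, ∀ᵐ x ∂μ, |v k x| ≤ (2:ℝ) ^ (σ * (k:ℝ)) * B)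
    (hw : ∀ k : ℤ, ∫⁻ x, ENNReal.ofReal ((u x - v k x) ^ 2) ∂μ
            ≤ ENNReal.ofReal (Mθ ^ 2) * ν {t | c * (2:ℝ) ^ (k:ℝ) < |t|})
    (hH2 : ∫⁻ t, ENNReal.ofReal (|t| ^ (2*s)) ∂ν = ENNReal.ofReal (H ^ 2)) :
    eLpNorm u (ENNReal.ofReal p) μ
      ≤ ENNReal.ofReal
          ((2 * Mθ ^ (2/p) * (p/(p-2)) ^ (1/p) * (2/c) ^ (σ*(p-2)/p))
            * B ^ (1 - 2/p) * H ^ (2/p)) := by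
  have hσp : σ * (p - 2) = 2 * s := by rw [hp]; field_simp; ring
  have hp₂ : 2 < p := by nlinarith
  set K := 2 * Mθ ^ (2/p) * (p/(p-2)) ^ (1/p) * (2/c) ^ (σ*(p-2)/p)
  have hbound : ∀ B' > B, eLpNorm u (ENNReal.ofReal p) μ
      ≤ ENNReal.ofReal (K * B' ^ (1 - 2/p) * H ^ (2/p)) := fun B' hB' =>
    eLpNorm_le_of_besov_bound_of_pos hσ hc (hB.trans_lt hB') hH hMθ hp₂
      (fun k => (hv k).mono fun x hx => hx.trans (by gcongr)) hw (by rwa [hσp])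
  have hexp : 0 < 1 - 2 / p := by rw [sub_pos, div_lt_one (by linarith)]; exact hp₂
  have hcont : Tendsto (fun B' => ENNReal.ofReal (K * B' ^ (1 - 2/p) * H ^ (2/p))) (𝓝[>] B)
      (𝓝 (ENNReal.ofReal (K * B ^ (1 - 2/p) * H ^ (2/p)))) :=
    ((ENNReal.continuous_ofReal.tendsto _).comp ((((Real.continuousAt_rpow_const _ _
      (Or.inr hexp.le)).const_mul K).mul_const _))).mono_left nhdsWithin_le_nhds
  exact ge_of_tendsto hcont (eventually_nhdsWithin_of_forall hbound)
end

section
/- Let φ ∈ 𝒮(ℝⁿ), η ∈ ℝⁿ \ {0}, u_ε(x) = e^{i x·η/ε} φ(x), θ ∈ C_0^∞(ℝ) with θ ≡ 1 near 0, and A = (−Δ)^{1/2}. Then for every σ ∈ (0, n] there is C > 0 such that ‖u_ε‖_{Ḃ^{-σ}_A} = sup_{λ>0} λ^{-σ} ‖θ(λ^{-1}A) u_ε‖_{L^∞} ≤ C ε^{σ} for all ε ∈ (0, 1]. -/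
open MeasureTheory Real FourierTransform RealInnerProductSpace

/-- The Fourier multiplier operator `m(D) u = 𝓕⁻¹(m · 𝓕 u)` on `ℝⁿ`. -/
noncomputable def fourierMult {n : ℕ} (m : EuclideanSpace ℝ (Fin n) → ℂ)
    (u : EuclideanSpace ℝ (Fin n) → ℂ) : EuclideanSpace ℝ (Fin n) → ℂ :=
  𝓕⁻ (fun ξ => m ξ * 𝓕 u ξ)

set_option maxHeartbeats 1000000 in
/-- Besov bound for oscillating functions: for `φ ∈ 𝒮(ℝⁿ)`, `η ≠ 0`,
`u_ε = e^{2πi x·η/ε} φ`, `θ ∈ C_0^∞` with `θ ≡ 1` near `0`, `A = (-Δ)^{1/2}` and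
`σ ∈ (0, n]`, one has `‖u_ε‖_{Ḃ^{-σ}_A} = sup_{λ>0} λ^{-σ} ‖θ(λ⁻¹A)u_ε‖_∞ ≤ C ε^σ`
for `ε ∈ (0,1]`. -/
theorem oscillating_besov_bound (n : ℕ) (hn : 0 < n)
    (φ : SchwartzMap (EuclideanSpace ℝ (Fin n)) ℂ)
    (η : EuclideanSpace ℝ (Fin n)) (hη : η ≠ 0)
    (θ : ℝ → ℝ) (hθs : ContDiff ℝ (⊤ : ℕ∞) θ) (hθc : HasCompactSupport θ)
    (hθ1 : ∃ c > (0:ℝ), ∀ t : ℝ, |t| ≤ c → θ t = 1)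
    (σ : ℝ) (hσ : σ ∈ Set.Ioc (0:ℝ) (n:ℝ)) :
    ∃ C > (0:ℝ), ∀ ε ∈ Set.Ioc (0:ℝ) 1,
      (⨆ (lam : ℝ) (_ : 0 < lam),
        ENNReal.ofReal (lam ^ (-σ)) *
          eLpNorm (fourierMult (fun ξ => ((θ (‖ξ‖ / lam) : ℝ) : ℂ))
            (fun x => (Real.fourierChar ((inner ℝ x η : ℝ) / ε) : ℂ) * φ x)) ⊤ volume)
      ≤ ENNReal.ofReal (C * ε ^ σ) := by
  obtain ⟨hσ0, hσn⟩ := hσ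
  obtain ⟨c0, hc0, hθone⟩ := hθ1
  -- bound on θ
  obtain ⟨M, hM⟩ := hθc.exists_bound_of_continuous hθs.continuous
  have hθ0 : θ 0 = 1 := hθone 0 (by simp [hc0.le])
  have hM1 : (1:ℝ) ≤ M := by have := hM 0; rw [hθ0] at this; simpa using this
  have hMpos : (0:ℝ) < M := lt_of_lt_of_le one_pos hM1
  -- support radius of θ
  obtain ⟨R0, hR0⟩ := hθc.isBounded.subset_closedBall 0
  set R : ℝ := max R0 1 with hRdef
  have hRpos : (0:ℝ) < R := lt_of_lt_of_le one_pos (le_max_right _ _)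
  have hRsupp : ∀ t : ℝ, R < |t| → θ t = 0 := by
    intro t ht
    apply image_eq_zero_of_notMem_tsupport
    intro hmem
    have h1 := hR0 hmem
    rw [Metric.mem_closedBall, Real.dist_eq, sub_zero] at h1
    have : |t| ≤ R := h1.trans (le_max_left _ _)
    linarith
  -- the Fourier transform of φ
  set ψ := SchwartzMap.fourierTransformCLM ℂ φ with hψdef
  have hψeq : ∀ ζ : EuclideanSpace ℝ (Fin n), ψ ζ =
      𝓕 (φ : EuclideanSpace ℝ (Fin n) → ℂ) ζ := fun ζ => by
    rw [hψdef]; rfl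
  obtain ⟨Cd, hCdpos, hCd⟩ := ψ.decay n 0
  have hCd' : ∀ ζ : EuclideanSpace ℝ (Fin n), ‖ζ‖ ^ n * ‖ψ ζ‖ ≤ Cd := by
    intro ζ; simpa [norm_iteratedFDeriv_zero] using hCd ζ
  set I₁ : ℝ := ∫ ξ : EuclideanSpace ℝ (Fin n), ‖ψ ξ‖ with hI₁def
  have hI₁nn : 0 ≤ I₁ := integral_nonneg fun _ => norm_nonneg _
  set V : ℝ := (volume (Metric.closedBall (0 : EuclideanSpace ℝ (Fin n)) 1)).toReal with hVdef
  have hVnn : 0 ≤ V := ENNReal.toReal_nonneg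
  have hηpos : (0:ℝ) < ‖η‖ := norm_pos_iff.2 hη
  set δ : ℝ := ‖η‖ / (2 * R) with hδdef
  have hδpos : (0:ℝ) < δ := div_pos hηpos (by positivity)
  set C1 : ℝ := δ ^ (-σ) * (M * I₁) with hC1def
  set C2 : ℝ := M * Cd * (2 / ‖η‖) ^ n * R ^ n * V * δ ^ ((n:ℝ) - σ) with hC2def
  have hC1nn : 0 ≤ C1 := by
    have := Real.rpow_nonneg hδpos.le (-σ); positivity
  have hC2nn : 0 ≤ C2 := by
    have := Real.rpow_nonneg hδpos.le ((n:ℝ) - σ); positivity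
  refine ⟨C1 + C2 + 1, by positivity, ?_⟩
  rintro ε ⟨hε0, hε1⟩
  have hεσnn : (0:ℝ) ≤ ε ^ σ := Real.rpow_nonneg hε0.le σ
  set v : EuclideanSpace ℝ (Fin n) := ε⁻¹ • η with hvdef
  have hmod : ∀ ξ : EuclideanSpace ℝ (Fin n), 𝓕
      (fun x : EuclideanSpace ℝ (Fin n) =>
        (Real.fourierChar ((inner ℝ x η : ℝ) / ε) : ℂ) * φ x) ξ = ψ (ξ - v) := by
    intro ξ
    rw [hψeq, hvdef]
    rw [Real.fourier_eq, Real.fourier_eq]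
    congr 1
    ext x
    simp only [Circle.smul_def, smul_eq_mul]
    rw [← mul_assoc, ← Circle.coe_mul, ← AddChar.map_add_eq_mul]
    congr 2
    simp only [inner_sub_right, real_inner_smul_right]
    field_simp
    ring
    rfl
  refine iSup_le fun lam => iSup_le fun hlam => ?_
  set I : ℝ := ∫ ξ : EuclideanSpace ℝ (Fin n), ‖((θ (‖ξ‖ / lam) : ℝ) : ℂ) * 𝓕
      (fun x : EuclideanSpace ℝ (Fin n) =>
        (Real.fourierChar ((inner ℝ x η : ℝ) / ε) : ℂ) * φ x) ξ‖ with hIdef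
  have hInn : 0 ≤ I := integral_nonneg fun _ => norm_nonneg _
  have hKle : eLpNorm (fourierMult (fun ξ => ((θ (‖ξ‖ / lam) : ℝ) : ℂ))
      (fun x => (Real.fourierChar ((inner ℝ x η : ℝ) / ε) : ℂ) * φ x)) ⊤ volume
      ≤ ENNReal.ofReal I := by
    rw [eLpNorm_exponent_top]
    apply eLpNormEssSup_le_of_ae_bound (C := I)
    filter_upwards with x
    exact VectorFourier.norm_fourierIntegral_le_integral_norm _ _ _ _ _
  -- pointwise norm of the integrand
  have hnorm : ∀ ξ : EuclideanSpace ℝ (Fin n), ‖((θ (‖ξ‖ / lam) : ℝ) : ℂ) * 𝓕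
      (fun x : EuclideanSpace ℝ (Fin n) =>
        (Real.fourierChar ((inner ℝ x η : ℝ) / ε) : ℂ) * φ x) ξ‖
      = |θ (‖ξ‖ / lam)| * ‖ψ (ξ - v)‖ := by
    intro ξ
    rw [norm_mul, hmod, Complex.norm_real, Real.norm_eq_abs]
  have hIbound : lam ^ (-σ) * I ≤ (C1 + C2 + 1) * ε ^ σ := by
    rcases le_or_gt (δ / ε) lam with hcase | hcase
    · -- large lam: trivial bound
      have hI : I ≤ M * I₁ := by
        have step : I ≤ ∫ ξ : EuclideanSpace ℝ (Fin n), M * ‖ψ (ξ - v)‖ := by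
          rw [hIdef]
          apply integral_mono_of_nonneg (ae_of_all _ fun ξ => norm_nonneg _)
            ((ψ.integrable.norm.comp_sub_right v).const_mul M)
          filter_upwards with ξ
          rw [hnorm]
          have h1 : |θ (‖ξ‖ / lam)| ≤ M := by
            have := hM (‖ξ‖ / lam); rwa [Real.norm_eq_abs] at this
          exact mul_le_mul_of_nonneg_right h1 (norm_nonneg _)
        have hI2 : (∫ ξ : EuclideanSpace ℝ (Fin n), M * ‖ψ (ξ - v)‖) = M * I₁ := by
          rw [integral_const_mul, hI₁def,
            integral_sub_right_eq_self (fun ξ : EuclideanSpace ℝ (Fin n) => ‖ψ ξ‖) v]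
        linarith
      have hlamle : lam ^ (-σ) ≤ δ ^ (-σ) * ε ^ σ := by
        have h1 : lam ^ (-σ) ≤ (δ / ε) ^ (-σ) :=
          Real.rpow_le_rpow_of_nonpos (div_pos hδpos hε0) hcase (neg_nonpos.2 hσ0.le)
        have h2 : (δ / ε) ^ (-σ) = δ ^ (-σ) * ε ^ σ := by
          rw [Real.div_rpow hδpos.le hε0.le, Real.rpow_neg hε0.le σ, div_eq_mul_inv, inv_inv]
        linarith
      calc lam ^ (-σ) * I ≤ (δ ^ (-σ) * ε ^ σ) * (M * I₁) := by
            apply mul_le_mul hlamle hI hInn (by positivity)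
        _ = C1 * ε ^ σ := by rw [hC1def]; ring
        _ ≤ (C1 + C2 + 1) * ε ^ σ := by nlinarith
    · -- small lam
      have hball : ∀ ξ : EuclideanSpace ℝ (Fin n), ‖ξ‖ ≤ R * lam →
          ‖η‖ / (2 * ε) ≤ ‖ξ - v‖ := by
        intro ξ hξ
        have h1 : ‖v‖ - ‖ξ‖ ≤ ‖ξ - v‖ := by
          have := norm_sub_norm_le v ξ
          rwa [norm_sub_rev v ξ] at this
        have hv : ‖v‖ = ‖η‖ / ε := by
          rw [hvdef, norm_smul, Real.norm_eq_abs, abs_of_pos (inv_pos.2 hε0), inv_mul_eq_div]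
        have h2 : R * lam ≤ ‖η‖ / (2 * ε) := by
          have h3 : R * lam ≤ R * (δ / ε) :=
            mul_le_mul_of_nonneg_left hcase.le hRpos.le
          have h4 : R * (δ / ε) = ‖η‖ / (2 * ε) := by
            rw [hδdef]; field_simp
          linarith
        have h5 : ‖η‖ / ε - ‖η‖ / (2 * ε) = ‖η‖ / (2 * ε) := by field_simp; ring
        rw [hv] at h1
        linarith
      have hψsmall : ∀ ζ : EuclideanSpace ℝ (Fin n), ‖η‖ / (2 * ε) ≤ ‖ζ‖ →
          ‖ψ ζ‖ ≤ Cd * (2 / ‖η‖) ^ n * ε ^ n := by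
        intro ζ hζ
        have ha : (0:ℝ) < ‖η‖ / (2 * ε) := by positivity
        have h1 : (‖η‖ / (2 * ε)) ^ n * ‖ψ ζ‖ ≤ Cd := by
          calc (‖η‖ / (2 * ε)) ^ n * ‖ψ ζ‖
              ≤ ‖ζ‖ ^ n * ‖ψ ζ‖ :=
                mul_le_mul_of_nonneg_right (pow_le_pow_left₀ ha.le hζ n) (norm_nonneg _)
            _ ≤ Cd := hCd' ζ
        have h2 : ‖ψ ζ‖ ≤ Cd / (‖η‖ / (2 * ε)) ^ n := by
          rw [le_div_iff₀ (by positivity)]; linarith [h1]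
        have h3 : Cd / (‖η‖ / (2 * ε)) ^ n = Cd * (2 / ‖η‖) ^ n * ε ^ n := by
          rw [div_pow, div_div_eq_mul_div, div_pow, mul_pow]; ring
        linarith
      set B : ℝ := M * (Cd * (2 / ‖η‖) ^ n * ε ^ n) with hBdef
      have hBnn : 0 ≤ B := by positivity
      have hI : I ≤ (R * lam) ^ n * V * B := by
        have hint : Integrable ((Metric.closedBall (0 : EuclideanSpace ℝ (Fin n))
            (R * lam)).indicator (fun _ => B)) volume := by
          rw [integrable_indicator_iff measurableSet_closedBall]
          exact integrableOn_const measure_closedBall_lt_top.ne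
        have hmono : ∀ ξ : EuclideanSpace ℝ (Fin n),
            ‖((θ (‖ξ‖ / lam) : ℝ) : ℂ) * 𝓕
              (fun x : EuclideanSpace ℝ (Fin n) =>
                (Real.fourierChar ((inner ℝ x η : ℝ) / ε) : ℂ) * φ x) ξ‖
            ≤ (Metric.closedBall (0 : EuclideanSpace ℝ (Fin n)) (R * lam)).indicator
                (fun _ => B) ξ := by
          intro ξ
          rw [hnorm]
          by_cases hξ : ξ ∈ Metric.closedBall (0 : EuclideanSpace ℝ (Fin n)) (R * lam)
          · rw [Set.indicator_of_mem hξ]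
            rw [Metric.mem_closedBall, dist_zero_right] at hξ
            have h1 : |θ (‖ξ‖ / lam)| ≤ M := by
              have := hM (‖ξ‖ / lam); rwa [Real.norm_eq_abs] at this
            have h2 : ‖ψ (ξ - v)‖ ≤ Cd * (2 / ‖η‖) ^ n * ε ^ n :=
              hψsmall _ (hball ξ hξ)
            rw [hBdef]
            exact mul_le_mul h1 h2 (norm_nonneg _) hMpos.le
          · rw [Set.indicator_of_notMem hξ]
            rw [Metric.mem_closedBall, dist_zero_right, not_le] at hξ
            have hθz : θ (‖ξ‖ / lam) = 0 := by
              apply hRsupp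
              rw [abs_of_nonneg (by positivity), lt_div_iff₀ hlam]
              linarith
            rw [hθz]; simp
        have step : I ≤ ∫ ξ : EuclideanSpace ℝ (Fin n),
            (Metric.closedBall (0 : EuclideanSpace ℝ (Fin n)) (R * lam)).indicator
              (fun _ => B) ξ := by
          rw [hIdef]
          exact integral_mono_of_nonneg (ae_of_all _ fun ξ => norm_nonneg _) hint
            (ae_of_all _ hmono)
        rw [integral_indicator_const B measurableSet_closedBall] at step
        have hvol : (volume (Metric.closedBall (0 : EuclideanSpace ℝ (Fin n))
            (R * lam))).toReal = (R * lam) ^ n * V := by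
          rw [Measure.addHaar_closedBall' volume (0 : EuclideanSpace ℝ (Fin n)) (by positivity)]
          rw [ENNReal.toReal_mul, ENNReal.toReal_ofReal (by positivity), hVdef]
          congr 2
          rw [finrank_euclideanSpace_fin]
        rw [measureReal_def, hvol, smul_eq_mul] at step
        linarith
      -- combine the powers
      have e1 : lam ^ (-σ) * ((lam:ℝ) ^ n) ≤ δ ^ ((n:ℝ) - σ) * ε ^ (σ - (n:ℝ)) := by
        have h1 : lam ^ (-σ) * ((lam:ℝ) ^ n) = lam ^ ((n:ℝ) - σ) := by
          rw [← Real.rpow_natCast lam n, ← Real.rpow_add hlam, neg_add_eq_sub]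
        have h2 : lam ^ ((n:ℝ) - σ) ≤ (δ / ε) ^ ((n:ℝ) - σ) :=
          Real.rpow_le_rpow hlam.le hcase.le (sub_nonneg.2 hσn)
        have h3 : (δ / ε) ^ ((n:ℝ) - σ) = δ ^ ((n:ℝ) - σ) * ε ^ (σ - (n:ℝ)) := by
          rw [Real.div_rpow hδpos.le hε0.le,
            show σ - (n:ℝ) = -((n:ℝ) - σ) by ring, Real.rpow_neg hε0.le, div_eq_mul_inv]
        linarith
      have e2 : ε ^ (σ - (n:ℝ)) * ((ε:ℝ) ^ n) = ε ^ σ := by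
        rw [← Real.rpow_natCast ε n, ← Real.rpow_add hε0, sub_add_cancel]
      have key : lam ^ (-σ) * ((R * lam) ^ n * V * B) ≤ C2 * ε ^ σ := by
        have expand : lam ^ (-σ) * ((R * lam) ^ n * V * B)
            = (lam ^ (-σ) * ((lam:ℝ) ^ n)) * (R ^ n * V * M * (Cd * (2 / ‖η‖) ^ n)
                * ((ε:ℝ) ^ n)) := by
          rw [hBdef, mul_pow]; ring
        rw [expand]
        have hrest : (0:ℝ) ≤ R ^ n * V * M * (Cd * (2 / ‖η‖) ^ n) * ((ε:ℝ) ^ n) := by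
          positivity
        calc (lam ^ (-σ) * ((lam:ℝ) ^ n)) * (R ^ n * V * M * (Cd * (2 / ‖η‖) ^ n) * ((ε:ℝ) ^ n))
            ≤ (δ ^ ((n:ℝ) - σ) * ε ^ (σ - (n:ℝ))) * (R ^ n * V * M * (Cd * (2 / ‖η‖) ^ n)
                * ((ε:ℝ) ^ n)) := mul_le_mul_of_nonneg_right e1 hrest
          _ = C2 * (ε ^ (σ - (n:ℝ)) * ((ε:ℝ) ^ n)) := by rw [hC2def]; ring
          _ = C2 * ε ^ σ := by rw [e2]
      calc lam ^ (-σ) * I ≤ lam ^ (-σ) * ((R * lam) ^ n * V * B) :=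
            mul_le_mul_of_nonneg_left hI (Real.rpow_nonneg hlam.le _)
        _ ≤ C2 * ε ^ σ := key
        _ ≤ (C1 + C2 + 1) * ε ^ σ := by nlinarith
  calc ENNReal.ofReal (lam ^ (-σ)) * eLpNorm (fourierMult (fun ξ => ((θ (‖ξ‖ / lam) : ℝ) : ℂ))
        (fun x => (Real.fourierChar ((inner ℝ x η : ℝ) / ε) : ℂ) * φ x)) ⊤ volume
      ≤ ENNReal.ofReal (lam ^ (-σ)) * ENNReal.ofReal I := mul_le_mul_right hKle _
    _ = ENNReal.ofReal (lam ^ (-σ) * I) :=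
        (ENNReal.ofReal_mul (Real.rpow_nonneg hlam.le _)).symm
    _ ≤ ENNReal.ofReal ((C1 + C2 + 1) * ε ^ σ) := ENNReal.ofReal_le_ofReal hIbound
end
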